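/- arXiv:1406.7083 — 2 statements merged into one kernel-verified Lean document; each statement's English description precedes it below -/
import Mathlib

section
/- The real Jacobian determinant of the involutive automorphism φ_a of the unit ball 𝔹 ⊂ ℂⁿ ≅ ℝ^{2n} at the point w equals ((1-|a|²)/|1-⟨a,w⟩|²)^{n+1}. -/
open MeasureTheory Metric Finset
noncomputable section
abbrev En (n : ℕ) := EuclideanSpace ℂ (Fin n)
instance (n : ℕ) : MeasurableSpace (En n) := borel _
instance (n : ℕ) : BorelSpace (En n) := ⟨rfl⟩
def ip {n : ℕ} (z w : En n) : ℂ := ∑ i, z i * (starRingEnd ℂ) (w i)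
/-- Lebesgue measure normalized so that the unit ball has volume 1. -/
def nvol (n : ℕ) : Measure (En n) :=
  (Measure.addHaar (ball (0 : En n) 1))⁻¹ • Measure.addHaar
def wvol (n : ℕ) (α : ℝ) : Measure (En n) :=
  ((nvol n).restrict (ball 0 1)).withDensity
    (fun z => ENNReal.ofReal ((Real.Gamma (n + α + 1) / (n.factorial * Real.Gamma (α + 1))) * (1 - ‖z‖ ^ 2) ^ α))
def pdi {n : ℕ} (i : Fin n) (f : En n → ℂ) (z : En n) : ℂ :=
  fderiv ℂ f z (EuclideanSpace.single i 1)
def mpd {n : ℕ} (m : Fin n → ℕ) (f : En n → ℂ) : En n → ℂ :=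
  Fin.foldr n (fun i g => (pdi i)^[m i] g) f
def Pα (n : ℕ) (α : ℝ) (g : En n → ℂ) (z : En n) : ℂ :=
  ∫ w, g w / (1 - ip z w) ^ ((n : ℂ) + 1 + α) ∂(wvol n α)
def phi {n : ℕ} (a w : En n) : En n :=
  (1 - ip w a)⁻¹ • ((a - (ip w a / (‖a‖ ^ 2 : ℂ)) • a) -
    ((Real.sqrt (1 - ‖a‖ ^ 2) : ℂ)) • (w - (ip w a / (‖a‖ ^ 2 : ℂ)) • a))

/-! With `s = √(1 - ‖a‖²)`, `φ_a` is the linear-fractional map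
`v ↦ (a - ⟪a, v⟫ c a - s v) / (1 - ⟪a, v⟫)`, `c = (1 - s) / ‖a‖²`, so its complex derivative at `w`
is `-s / (1 - ⟪a, w⟫)` times the identity plus a rank-one map. The matrix determinant lemma gives
the complex determinant `(-s / (1 - ⟪a, w⟫)) ^ n * s / (1 - ⟪a, w⟫)`, and the real determinant of a
complex-linear map is the squared modulus of its complex determinant. -/

namespace LinearMap

theorem det_id_add_smulRight {R M : Type*} [CommRing R] [AddCommGroup M] [Module R M]
    [Module.Free R M] [Module.Finite R M] (f : M →ₗ[R] R) (u : M) :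
    (id + f.smulRight u).det = 1 + f u := by
  let b := Module.Free.chooseBasis R M
  let e := Module.Basis.singleton Unit R
  have hcomp : f.smulRight u = toSpanSingleton R M u ∘ₗ f := by ext; simp
  rw [← det_toMatrix b, map_add, toMatrix_id, hcomp, toMatrix_comp b e b,
    Matrix.det_one_add_mul_comm, ← toMatrix_comp e b e, ← toMatrix_id e, ← map_add,
    det_toMatrix, det_ring]
  simp

theorem det_smul_id_add_smulRight {K V : Type*} [Field K] [AddCommGroup V] [Module K V]
    [FiniteDimensional K V] (f : V →ₗ[K] K) (u : V) {c : K} (hc : c ≠ 0) :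
    (c • id + f.smulRight u).det = c ^ Module.finrank K V * (1 + c⁻¹ * f u) := by
  have hfactor : c • id + f.smulRight u = c • (id + f.smulRight (c⁻¹ • u)) := by
    ext v; simp [smul_smul, hc, mul_left_comm c]
  rw [hfactor, det_smul, det_id_add_smulRight, map_smul, smul_eq_mul]

end LinearMap

theorem hasFDerivAt_inv_one_sub_smul {E : Type*} [NormedAddCommGroup E] [NormedSpace ℂ E]
    (ℓ : E →L[ℂ] ℂ) (b e : E) (s : ℂ) {w : E} (hw : 1 - ℓ w ≠ 0) :
    HasFDerivAt (fun v => (1 - ℓ v)⁻¹ • (b - ℓ v • e - s • v))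
      ((-s / (1 - ℓ w)) • ContinuousLinearMap.id ℂ E +
        ℓ.smulRight (((1 - ℓ w) ^ 2)⁻¹ • (b - e - s • w))) w := by
  have hinv : HasFDerivAt (fun v => (1 - ℓ v)⁻¹) (((1 - ℓ w) ^ 2)⁻¹ • ℓ) w :=
    ((hasDerivAt_inv hw).comp_hasFDerivAt w
      ((hasFDerivAt_const 1 w).sub ℓ.hasFDerivAt)).congr_fderiv (by ext; simp)
  have hnum : HasFDerivAt (fun v => b - ℓ v • e - s • v)
      (-ℓ.smulRight e - s • ContinuousLinearMap.id ℂ E) w :=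
    (((hasFDerivAt_const b w).sub (ℓ.smulRight e).hasFDerivAt).sub
      (s • ContinuousLinearMap.id ℂ E).hasFDerivAt).congr_fderiv (by simp)
  refine (hinv.smul hnum).congr_fderiv ?_
  ext h
  simp only [add_apply, smul_apply, sub_apply, neg_apply, ContinuousLinearMap.smulRight_apply,
    ContinuousLinearMap.id_apply, smul_eq_mul]
  match_scalars <;> field_simp
  ring

theorem one_sub_inner_ne_zero {𝕜 E : Type*} [RCLike 𝕜] [NormedAddCommGroup E]
    [InnerProductSpace 𝕜 E] {a w : E} (ha : ‖a‖ < 1) (hw : ‖w‖ < 1) :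
    1 - inner 𝕜 a w ≠ 0 := by
  refine sub_ne_zero.mpr fun h => ?_
  have hlt : ‖inner 𝕜 a w‖ < 1 := (norm_inner_le_norm a w).trans_lt
    (by nlinarith [norm_nonneg a, norm_nonneg w])
  simp [← h] at hlt

section Ball

variable {n : ℕ}

lemma ip_eq_inner (v a : En n) : ip v a = inner ℂ a v := by
  simp [ip, PiLp.inner_apply]

lemma norm_one_sub_ip_comm (a w : En n) : ‖1 - ip a w‖ = ‖1 - ip w a‖ := by
  have hconj : ip a w = starRingEnd ℂ (ip w a) := by simp [ip, map_sum, mul_comm]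
  rw [hconj, ← Complex.norm_conj, map_sub, map_one, Complex.conj_conj]

lemma phi_eq (a : En n) :
    phi a = fun v => (1 - innerSL ℂ a v)⁻¹ • (a - innerSL ℂ a v •
      (((1 - Real.sqrt (1 - ‖a‖ ^ 2) : ℂ) / (‖a‖ ^ 2 : ℂ)) • a) -
        (Real.sqrt (1 - ‖a‖ ^ 2) : ℂ) • v) := by
  ext1 v
  rw [phi, ip_eq_inner, innerSL_apply_apply]
  congr 1
  match_scalars <;> ring

end Ball

theorem stmt6 (n : ℕ) (a w : En n) (ha : a ∈ ball (0 : En n) 1) (ha0 : a ≠ 0)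
    (hw : w ∈ ball (0 : En n) 1) :
    LinearMap.det ((fderiv ℝ (phi a) w).toLinearMap) =
      ((1 - ‖a‖ ^ 2) / ‖1 - ip a w‖ ^ 2) ^ (n + 1) := by
  set s : ℝ := Real.sqrt (1 - ‖a‖ ^ 2)
  set ℓ := innerSL ℂ a
  rw [mem_ball_zero_iff] at ha hw
  have hs2 : s ^ 2 = 1 - ‖a‖ ^ 2 := Real.sq_sqrt (by nlinarith [norm_nonneg a])
  have hs : (s : ℂ) ≠ 0 := by
    exact_mod_cast (Real.sqrt_pos.mpr (by nlinarith [norm_nonneg a])).ne'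
  have hd : 1 - ℓ w ≠ 0 := one_sub_inner_ne_zero ha hw
  have hD := hasFDerivAt_inv_one_sub_smul ℓ a (((1 - s : ℂ) / (‖a‖ ^ 2 : ℂ)) • a) s hd
  rw [← phi_eq] at hD
  rw [(hD.restrictScalars ℝ).fderiv, ContinuousLinearMap.coe_restrictScalars,
    LinearMap.det_restrictScalars, Algebra.norm_complex_apply]
  erw [LinearMap.det_smul_id_add_smulRight _ _ (div_ne_zero (neg_ne_zero.mpr hs) hd)]
  have hfactor : 1 + (-(s : ℂ) / (1 - ℓ w))⁻¹ *
      ℓ (((1 - ℓ w) ^ 2)⁻¹ • (a - ((1 - s : ℂ) / (‖a‖ ^ 2 : ℂ)) • a - (s : ℂ) • w)) =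
      s / (1 - ℓ w) := by
    have hA : (‖a‖ ^ 2 : ℂ) = 1 - (s : ℂ) ^ 2 := by
      exact_mod_cast (by linarith : ‖a‖ ^ 2 = 1 - s ^ 2)
    have hna : (‖a‖ : ℂ) ≠ 0 := by exact_mod_cast norm_ne_zero_iff.mpr ha0
    have hℓa : ℓ a = ‖a‖ ^ 2 := by simp [ℓ, inner_self_eq_norm_sq_to_K]
    simp only [map_smul, map_sub, hℓa, smul_eq_mul]
    field_simp
    rw [hA]
    ring
  rw [ContinuousLinearMap.coe_coe, hfactor, finrank_euclideanSpace_fin, neg_div, map_mul,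
    map_pow, Complex.normSq_neg, ← pow_succ, Complex.normSq_div, Complex.normSq_ofReal, ← sq, hs2,
    Complex.normSq_eq_norm_sq, norm_one_sub_ip_comm, ip_eq_inner]
  rfl
end
end

section
/- For Re(c-a-b) > 0 the Gauss hypergeometric series at 1 satisfies ₂F₁(a,b;c;1) = Γ(c)Γ(c-a-b)/(Γ(c-a)Γ(c-b)). -/
open MeasureTheory Metric Finset
noncomputable section
/-!
Write `t_k(c)` for the coefficients of `F(c) = ₂F₁(a,b;c;1)`. Termwise,
`(c-a)(c-b)/c · t_k(c+1) - (c-a-b) t_k(c) = (k+1) t_{k+1}(c) - k t_k(c)`. Since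
`t_{n+1}(c) ~ Γ(c)/(Γ(a)Γ(b)) n^{a+b-c-1}`, the series converges and `k t_k → 0`, so summing
telescopes to Gauss's contiguous relation `c (c-a-b) F(c) = (c-a)(c-b) F(c+1)`. Iterating,
`F(c) = (c-a)_N (c-b)_N / ((c)_N (c-a-b)_N) · F(c+N)`. As `N → ∞` the Pochhammer quotient tends
to `Γ(c)Γ(c-a-b)/(Γ(c-a)Γ(c-b))` by Euler's limit `(s)_{n+1} ~ n^s n!/Γ(s)`, while
`F(c+N) → 1` by dominated convergence.
-/

open Filter Topology Complex
open scoped Nat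

theorem ascPochhammer_eval_eq_prod_range {R : Type*} [CommSemiring R] (x : R) (n : ℕ) :
    (ascPochhammer R n).eval x = ∏ j ∈ range n, (x + j) := by
  induction n with
  | zero => simp
  | succ n ih => rw [ascPochhammer_succ_eval, ih, prod_range_succ]

theorem ascPochhammer_eval_ne_zero {R : Type*} [CommRing R] [IsDomain R] {x : R}
    (hx : ∀ m : ℕ, x ≠ -m) (n : ℕ) : (ascPochhammer R n).eval x ≠ 0 := by
  rw [ne_eq, ascPochhammer_eval_eq_zero_iff]
  rintro ⟨m, -, hm⟩
  exact hx m (by rw [hm, neg_neg])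

theorem ascPochhammer_eval_succ_eq_GammaSeq_inv (s : ℂ) {n : ℕ} (hn : n ≠ 0) :
    (ascPochhammer ℂ (n + 1)).eval s = n ^ s * n ! * (GammaSeq s n)⁻¹ := by
  have hne : (n : ℂ) ^ s * n ! ≠ 0 := by
    apply mul_ne_zero <;> simp [cpow_eq_zero_iff, hn, Nat.factorial_ne_zero]
  rw [GammaSeq, inv_div, ascPochhammer_eval_eq_prod_range, mul_div_cancel₀ _ hne]

theorem Complex.tendsto_GammaSeq_inv (s : ℂ) :
    Tendsto (fun n ↦ (GammaSeq s n)⁻¹) atTop (𝓝 (Gamma s)⁻¹) := by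
  by_cases hs : Gamma s = 0
  -- at a pole `s = -m`, Mathlib's `Gamma s` is `0`, and so is `GammaSeq s n` for `n ≥ m`
  · obtain ⟨m, rfl⟩ := (Gamma_eq_zero_iff _).mp hs
    rw [hs, inv_zero]
    refine tendsto_const_nhds.congr' ?_
    filter_upwards [eventually_ge_atTop m] with n hn
    rw [GammaSeq, ← ascPochhammer_eval_eq_prod_range,
      (ascPochhammer_eval_eq_zero_iff _ _).mpr ⟨m, by omega, (neg_neg _).symm⟩, div_zero,
      inv_zero]
  · exact (GammaSeq_tendsto_Gamma s).inv₀ hs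

theorem tendsto_ascPochhammer_eval_ratio {x y z w : ℂ} (hxy : x + y = z + w)
    (hz : ∀ m : ℕ, z ≠ -m) (hw : ∀ m : ℕ, w ≠ -m) :
    Tendsto (fun N : ℕ ↦ (ascPochhammer ℂ N).eval x * (ascPochhammer ℂ N).eval y /
        ((ascPochhammer ℂ N).eval z * (ascPochhammer ℂ N).eval w)) atTop
      (𝓝 (Gamma z * Gamma w / (Gamma x * Gamma y))) := by
  have hlim := ((tendsto_GammaSeq_inv x).mul (tendsto_GammaSeq_inv y)).div
    ((tendsto_GammaSeq_inv z).mul (tendsto_GammaSeq_inv w))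
    (mul_ne_zero (inv_ne_zero (Gamma_ne_zero hz)) (inv_ne_zero (Gamma_ne_zero hw)))
  rw [← mul_inv, ← mul_inv, inv_div_inv] at hlim
  refine (tendsto_add_atTop_iff_nat 1).mp (hlim.congr' ?_)
  filter_upwards [eventually_ne_atTop 0] with n hn
  have hpow : (n : ℂ) ^ x * n ^ y = n ^ z * n ^ w := by
    rw [← cpow_add _ _ (Nat.cast_ne_zero.mpr hn), hxy, cpow_add _ _ (Nat.cast_ne_zero.mpr hn)]
  have hne : (n : ℂ) ^ z * n ^ w * (n ! * n !) ≠ 0 := by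
    simp [cpow_eq_zero_iff, hn, Nat.factorial_ne_zero]
  simp only [ascPochhammer_eval_succ_eq_GammaSeq_inv _ hn]
  calc _ = (n ^ x * n ^ y * (n ! * n !)) * ((GammaSeq x n)⁻¹ * (GammaSeq y n)⁻¹) /
        ((n ^ z * n ^ w * (n ! * n !)) * ((GammaSeq z n)⁻¹ * (GammaSeq w n)⁻¹)) := by
          rw [hpow, mul_div_mul_left _ _ hne]; rfl
    _ = _ := by ring

section Field

variable {𝕂 : Type*} [Field 𝕂]

theorem ordinaryHypergeometricCoefficient_succ (a b c : 𝕂) (k : ℕ) :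
    ordinaryHypergeometricCoefficient a b c (k + 1) =
      (a + k) * (b + k) / ((k + 1) * (c + k)) * ordinaryHypergeometricCoefficient a b c k := by
  simp only [ordinaryHypergeometricCoefficient, ascPochhammer_succ_eval, Nat.factorial_succ,
    Nat.cast_mul, Nat.cast_succ, mul_inv, div_eq_mul_inv]
  ring

theorem ordinaryHypergeometricCoefficient_add_one_right {c : 𝕂} (hc : c ≠ 0) (a b : 𝕂)
    (k : ℕ) :
    ordinaryHypergeometricCoefficient a b (c + 1) k =
      c / (c + k) * ordinaryHypergeometricCoefficient a b c k := by
  have hshift :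
      (ascPochhammer 𝕂 k).eval c * (c + k) = c * (ascPochhammer 𝕂 k).eval (c + 1) := by
    rw [← ascPochhammer_succ_eval, ascPochhammer_succ_left]
    simp [Polynomial.eval_comp]
  have hinv : ((ascPochhammer 𝕂 k).eval (c + 1))⁻¹ =
      c * ((ascPochhammer 𝕂 k).eval c)⁻¹ * (c + k)⁻¹ := by
    rw [mul_assoc, ← mul_inv, hshift, mul_inv, ← mul_assoc, mul_inv_cancel₀ hc, one_mul]
  simp only [ordinaryHypergeometricCoefficient, hinv, div_eq_mul_inv]
  ring

theorem ordinaryHypergeometricCoefficient_contiguous [CharZero 𝕂] {a b c : 𝕂} (hc : c ≠ 0)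
    {k : ℕ} (hck : c + k ≠ 0) :
    (c - a) * (c - b) / c * ordinaryHypergeometricCoefficient a b (c + 1) k -
        (c - a - b) * ordinaryHypergeometricCoefficient a b c k =
      (k + 1) * ordinaryHypergeometricCoefficient a b c (k + 1) -
        k * ordinaryHypergeometricCoefficient a b c k := by
  rw [ordinaryHypergeometricCoefficient_add_one_right hc, ordinaryHypergeometricCoefficient_succ]
  have hk : (k + 1 : 𝕂) ≠ 0 := Nat.cast_add_one_ne_zero k
  field_simp
  ring

end Field

theorem ordinaryHypergeometricCoefficient_succ_eq_GammaSeq (a b c : ℂ) {n : ℕ} (hn : n ≠ 0) :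
    (n + 1) * n ^ (c - a - b) * ordinaryHypergeometricCoefficient a b c (n + 1) =
      (GammaSeq a n)⁻¹ * (GammaSeq b n)⁻¹ / (GammaSeq c n)⁻¹ := by
  have hn' : (n : ℂ) ≠ 0 := Nat.cast_ne_zero.mpr hn
  have hpow : ∀ s : ℂ, (n : ℂ) ^ s ≠ 0 := fun s ↦ by simp [cpow_eq_zero_iff, hn']
  have hfac : (n ! : ℂ) ≠ 0 := Nat.cast_ne_zero.mpr n.factorial_ne_zero
  have hn1 : (n + 1 : ℂ) ≠ 0 := Nat.cast_add_one_ne_zero n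
  simp only [ordinaryHypergeometricCoefficient, ascPochhammer_eval_succ_eq_GammaSeq_inv _ hn,
    Nat.factorial_succ, Nat.cast_mul, Nat.cast_succ, cpow_sub _ _ hn', mul_inv, div_eq_mul_inv]
  field_simp [hpow a, hpow b, hpow c]

theorem tendsto_mul_cpow_ordinaryHypergeometricCoefficient (a b : ℂ) {c : ℂ}
    (hc : ∀ m : ℕ, c ≠ -m) :
    Tendsto (fun n : ℕ ↦
        (n + 1) * n ^ (c - a - b) * ordinaryHypergeometricCoefficient a b c (n + 1))
      atTop (𝓝 (Gamma c / (Gamma a * Gamma b))) := by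
  have hlim := ((tendsto_GammaSeq_inv a).mul (tendsto_GammaSeq_inv b)).div
    (tendsto_GammaSeq_inv c) (inv_ne_zero (Gamma_ne_zero hc))
  rw [← mul_inv, inv_div_inv] at hlim
  refine hlim.congr' ?_
  filter_upwards [eventually_ne_atTop 0] with n hn
  exact (ordinaryHypergeometricCoefficient_succ_eq_GammaSeq a b c hn).symm

theorem tendsto_natCast_cpow_atTop_zero {s : ℂ} (hs : s.re < 0) :
    Tendsto (fun n : ℕ ↦ (n : ℂ) ^ s) atTop (𝓝 0) := by
  rw [tendsto_zero_iff_norm_tendsto_zero]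
  refine (((tendsto_rpow_neg_atTop (neg_pos.mpr hs)).comp tendsto_natCast_atTop_atTop).congr' ?_)
  filter_upwards [eventually_ne_atTop 0] with n hn
  rw [Function.comp_apply, neg_neg, norm_natCast_cpow_of_pos (Nat.pos_of_ne_zero hn)]

theorem tendsto_natCast_mul_ordinaryHypergeometricCoefficient {a b c : ℂ}
    (hc : ∀ m : ℕ, c ≠ -m) (h : 0 < (c - a - b).re) :
    Tendsto (fun k : ℕ ↦ k * ordinaryHypergeometricCoefficient a b c k) atTop (𝓝 0) := by
  rw [← tendsto_add_atTop_iff_nat 1]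
  have hlim := (tendsto_natCast_cpow_atTop_zero (s := -(c - a - b)) (by simpa using h)).mul
    (tendsto_mul_cpow_ordinaryHypergeometricCoefficient a b hc)
  rw [zero_mul] at hlim
  refine hlim.congr' ?_
  filter_upwards [eventually_ne_atTop 0] with n hn
  have hpow : (n : ℂ) ^ (c - a - b) ≠ 0 := by simp [cpow_eq_zero_iff, hn]
  rw [cpow_neg, Nat.cast_succ]
  field_simp

theorem summable_norm_ordinaryHypergeometricCoefficient {a b c : ℂ}
    (hc : ∀ m : ℕ, c ≠ -m) (h : 0 < (c - a - b).re) :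
    Summable (fun k : ℕ ↦ ‖ordinaryHypergeometricCoefficient a b c k‖) := by
  set C := ‖Gamma c / (Gamma a * Gamma b)‖ + 1
  rw [← summable_nat_add_iff 1]
  refine Summable.of_norm_bounded_eventually_nat
    ((Real.summable_nat_rpow.mpr (by linarith : -(1 + (c - a - b).re) < -1)).mul_left C) ?_
  filter_upwards [(tendsto_mul_cpow_ordinaryHypergeometricCoefficient a b hc).norm
    |>.eventually_lt_const (lt_add_one _), eventually_ne_atTop 0] with n hbound hn
  have hn' : (0 : ℝ) < n := Nat.cast_pos.mpr (Nat.pos_of_ne_zero hn)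
  rw [norm_mul, norm_mul, ← Nat.cast_succ, norm_natCast,
    norm_natCast_cpow_of_pos (Nat.pos_of_ne_zero hn)] at hbound
  have hpow : (0 : ℝ) < n ^ (c - a - b).re := Real.rpow_pos_of_pos hn' _
  rw [norm_norm, Real.rpow_neg (Nat.cast_nonneg _), Real.rpow_one_add' (Nat.cast_nonneg _)
    (by linarith), ← div_eq_mul_inv, le_div_iff₀ (by positivity)]
  push_cast at hbound
  nlinarith [norm_nonneg (ordinaryHypergeometricCoefficient a b c (n + 1))]

theorem ne_neg_natCast_of_re_pos {z : ℂ} (hz : 0 < z.re) (m : ℕ) : z ≠ -m := fun h ↦ by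
  rw [h, neg_re, natCast_re] at hz
  linarith [m.cast_nonneg (α := ℝ)]

theorem add_natCast_ne_neg_natCast {c : ℂ} (hc : ∀ m : ℕ, c ≠ -m) (N m : ℕ) :
    c + N ≠ -m :=
  fun h ↦ hc (m + N) (by push_cast; linear_combination h)

theorem tsum_ordinaryHypergeometricCoefficient_eq_mul_tsum_add_one {a b c : ℂ}
    (hc : ∀ m : ℕ, c ≠ -m) (h : 0 < (c - a - b).re) :
    ∑' k, ordinaryHypergeometricCoefficient a b c k = (c - a) * (c - b) / (c * (c - a - b)) *
      ∑' k, ordinaryHypergeometricCoefficient a b (c + 1) k := by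
  have hc0 : c ≠ 0 := by simpa using hc 0
  have hcab : c - a - b ≠ 0 := by simpa using ne_neg_natCast_of_re_pos h 0
  have hc1 : ∀ m : ℕ, c + 1 ≠ -m := by simpa using add_natCast_ne_neg_natCast hc 1
  have h1 : 0 < (c + 1 - a - b).re := by simp only [sub_re, add_re, one_re] at h ⊢; linarith
  have htelescope : ∀ n : ℕ, ∑ k ∈ range n, ((c - a) * (c - b) / c *
      ordinaryHypergeometricCoefficient a b (c + 1) k -
        (c - a - b) * ordinaryHypergeometricCoefficient a b c k) =
      n * ordinaryHypergeometricCoefficient a b c n := fun n ↦ by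
    rw [Finset.sum_congr rfl fun k _ ↦ ordinaryHypergeometricCoefficient_contiguous hc0
      fun h0 ↦ hc k (eq_neg_of_add_eq_zero_left h0)]
    simpa using Finset.sum_range_sub (fun k ↦ k * ordinaryHypergeometricCoefficient a b c k) n
  have hlim := (((summable_norm_ordinaryHypergeometricCoefficient hc1 h1).of_norm.hasSum.mul_left
    ((c - a) * (c - b) / c)).sub
      ((summable_norm_ordinaryHypergeometricCoefficient hc h).of_norm.hasSum.mul_left
        (c - a - b))).tendsto_sum_nat
  simp only [htelescope] at hlim
  have hzero :=
    tendsto_nhds_unique hlim (tendsto_natCast_mul_ordinaryHypergeometricCoefficient hc h)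
  calc _ = (c - a) * (c - b) / c * (∑' k, ordinaryHypergeometricCoefficient a b (c + 1) k) /
        (c - a - b) := by rw [eq_div_iff hcab]; linear_combination -hzero
    _ = _ := by simp only [div_mul_eq_mul_div, div_div]

theorem tsum_ordinaryHypergeometricCoefficient_eq_mul_tsum_add_natCast {a b c : ℂ}
    (hc : ∀ m : ℕ, c ≠ -m) (h : 0 < (c - a - b).re) (N : ℕ) :
    ∑' k, ordinaryHypergeometricCoefficient a b c k =
      (ascPochhammer ℂ N).eval (c - a) * (ascPochhammer ℂ N).eval (c - b) /
        ((ascPochhammer ℂ N).eval c * (ascPochhammer ℂ N).eval (c - a - b)) *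
      ∑' k, ordinaryHypergeometricCoefficient a b (c + N) k := by
  induction N with
  | zero => simp
  | succ N ih =>
    have hN : 0 < (c + N - a - b).re := by
      simp only [sub_re, add_re, natCast_re] at h ⊢; linarith [N.cast_nonneg (α := ℝ)]
    rw [ih, tsum_ordinaryHypergeometricCoefficient_eq_mul_tsum_add_one
      (add_natCast_ne_neg_natCast hc N) hN, Nat.cast_succ, ← add_assoc, ← mul_assoc,
      div_mul_div_comm]
    simp only [ascPochhammer_succ_eval]
    congr 2 <;> ring

theorem norm_ascPochhammer_eval_le_of_norm_le_re {x y : ℂ} (h : ‖x‖ ≤ y.re) (k : ℕ) :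
    ‖(ascPochhammer ℂ k).eval x‖ ≤ ‖(ascPochhammer ℂ k).eval y‖ := by
  simp only [ascPochhammer_eval_eq_prod_range, norm_prod]
  gcongr with j
  calc ‖x + j‖ ≤ ‖x‖ + j := by simpa using norm_add_le x j
    _ ≤ (y + j).re := by simp only [add_re, natCast_re]; linarith
    _ ≤ ‖y + j‖ := re_le_norm _

theorem norm_ordinaryHypergeometricCoefficient_le {a b c a' b' c' : ℂ} (ha : ‖a‖ ≤ a'.re)
    (hb : ‖b‖ ≤ b'.re) (hc : ‖c'‖ ≤ c.re) (hc' : ∀ m : ℕ, c' ≠ -m) (k : ℕ) :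
    ‖ordinaryHypergeometricCoefficient a b c k‖ ≤
      ‖ordinaryHypergeometricCoefficient a' b' c' k‖ := by
  have hpos := norm_pos_iff.mpr (ascPochhammer_eval_ne_zero hc' k)
  simp only [ordinaryHypergeometricCoefficient, norm_mul, norm_inv]
  gcongr
  exacts [norm_ascPochhammer_eval_le_of_norm_le_re ha k,
    norm_ascPochhammer_eval_le_of_norm_le_re hb k, norm_ascPochhammer_eval_le_of_norm_le_re hc k]

theorem tendsto_ordinaryHypergeometricCoefficient_add_natCast (a b c : ℂ) {k : ℕ}
    (hk : k ≠ 0) :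
    Tendsto (fun N : ℕ ↦ ordinaryHypergeometricCoefficient a b (c + N) k) atTop (𝓝 0) := by
  have hdeg : 0 < (ascPochhammer ℂ k).degree := by
    rw [Polynomial.degree_eq_natDegree (monic_ascPochhammer ℂ k).ne_zero, ascPochhammer_natDegree]
    exact_mod_cast Nat.pos_of_ne_zero hk
  have hnorm : Tendsto (fun N : ℕ ↦ ‖c + N‖) atTop atTop :=
    tendsto_atTop_mono (fun N ↦ by simpa using re_le_norm (c + N))
      (tendsto_atTop_add_const_left _ c.re tendsto_natCast_atTop_atTop)
  have hinv :
      Tendsto (fun N : ℕ ↦ ((ascPochhammer ℂ k).eval (c + N))⁻¹) atTop (𝓝 0) := by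
    rw [tendsto_zero_iff_norm_tendsto_zero]
    simp only [norm_inv]
    exact ((ascPochhammer ℂ k).tendsto_norm_atTop hdeg hnorm).inv_tendsto_atTop
  simpa using
    hinv.const_mul ((k ! : ℂ)⁻¹ * (ascPochhammer ℂ k).eval a * (ascPochhammer ℂ k).eval b)

theorem tendsto_tsum_ordinaryHypergeometricCoefficient_add_natCast (a b c : ℂ) :
    Tendsto (fun N : ℕ ↦ ∑' k, ordinaryHypergeometricCoefficient a b (c + N) k) atTop
      (𝓝 1) := by
  set M := max ‖a‖ ‖b‖
  set D := 2 * M + 1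
  have hD : 0 < D := by positivity
  have hDne : ∀ m : ℕ, (D : ℂ) ≠ -m := ne_neg_natCast_of_re_pos (by simpa using hD)
  have hsum := summable_norm_ordinaryHypergeometricCoefficient (a := M) (b := M) hDne
    (by simp [D]; linarith)
  have hlim : ∀ k, Tendsto (fun N : ℕ ↦ ordinaryHypergeometricCoefficient a b (c + N) k) atTop
      (𝓝 (if k = 0 then 1 else 0)) := fun k ↦ by
    rcases eq_or_ne k 0 with rfl | hk
    · simp [ordinaryHypergeometricCoefficient]
    · simpa [hk] using tendsto_ordinaryHypergeometricCoefficient_add_natCast a b c hk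
  have hbound : ∀ᶠ N : ℕ in atTop, ∀ k,
      ‖ordinaryHypergeometricCoefficient a b (c + N) k‖ ≤
        ‖ordinaryHypergeometricCoefficient (M : ℂ) M D k‖ := by
    filter_upwards [(tendsto_atTop_add_const_left _ c.re tendsto_natCast_atTop_atTop)
      |>.eventually_ge_atTop D] with N hN
    exact norm_ordinaryHypergeometricCoefficient_le (by simp [M]) (by simp [M])
      (by simpa [abs_of_pos hD] using hN) hDne
  simpa using tendsto_tsum_of_dominated_convergence hsum hlim hbound

theorem stmt9 (a b c : ℂ) (hc : ∀ k : ℕ, c ≠ -(k : ℂ)) (h : 0 < (c - a - b).re) :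
    ∑' k : ℕ, ((ascPochhammer ℂ k).eval a * (ascPochhammer ℂ k).eval b) /
        (k.factorial * (ascPochhammer ℂ k).eval c) =
      Complex.Gamma c * Complex.Gamma (c - a - b) /
        (Complex.Gamma (c - a) * Complex.Gamma (c - b)) := by
  have hlim := (tendsto_ascPochhammer_eval_ratio (x := c - a) (y := c - b) (by ring) hc
    (ne_neg_natCast_of_re_pos h)).mul
      (tendsto_tsum_ordinaryHypergeometricCoefficient_add_natCast a b c)
  rw [mul_one, ← funext (tsum_ordinaryHypergeometricCoefficient_eq_mul_tsum_add_natCast hc h)]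
    at hlim
  convert tendsto_nhds_unique tendsto_const_nhds hlim using 3 with k
  simp only [div_eq_mul_inv, mul_inv]
  ring
end
end
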